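/- arXiv:1512.02791 — 5 statements merged into one kernel-verified Lean document; each statement's English description precedes it below -/
import Mathlib

section
/- For every symmetric polynomial P in n variables over a commutative ring R, there exists a polynomial T in n variables over R such that P equals T composed with the elementary symmetric polynomials σ_{n,1}, ..., σ_{n,n}. -/
theorem fundamental_theorem_symmetric_polynomials
    (R : Type*) [CommRing R] (n : ℕ) (P : MvPolynomial (Fin n) R)
    (hP : P.IsSymmetric) :
    ∃ T : MvPolynomial (Fin n) R,
      P = MvPolynomial.bind₁
        (fun i : Fin n => MvPolynomial.esymm (Fin n) R (i.1 + 1)) T := by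
  obtain ⟨T, hT⟩ := MvPolynomial.esymmAlgHom_surjective R (Fintype.card_fin n).le ⟨P, hP⟩
  refine ⟨T, ?_⟩
  rw [← MvPolynomial.aeval_eq_bind₁, ← MvPolynomial.esymmAlgHom_apply, hT]
end

section
/- In the fundamental theorem of symmetric polynomials, the decomposition polynomial T can be chosen so that its weight is at most the total degree of P, where the weight of a monomial X_1^{k_1}···X_n^{k_n} is defined as Σ_{i=1}^n i·k_i and the weight of a polynomial is the maximum weight of its monomials. -/
/-!
Substituting `esymm (i + 1)` for `X i` is a bijection from `MvPolynomial (Fin n) R` onto the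
symmetric polynomials, and since `esymm k` is homogeneous of degree `k`, it maps the weight-`d`
component of `T` (with `X i` of weight `i + 1`) onto the degree-`d` homogeneous component of its
image. So if `P` is the image of `T`, injectivity forces every component of `T` of weight above
`P.totalDegree` to vanish.
-/

/-- The weight of a multivariate polynomial: the maximum over its monomials
`X_1^{k_1} ⋯ X_n^{k_n}` of `∑ i, i * k_i` (variables counted from 1). -/
def mweight {R : Type*} [CommRing R] {n : ℕ} (q : MvPolynomial (Fin n) R) : ℕ :=
  q.support.sup (fun m => ∑ i : Fin n, (i.1 + 1) * m i)

open MvPolynomial Finset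

namespace MvPolynomial

variable {σ τ R S : Type*}

theorem isHomogeneous_esymm [CommSemiring R] [Fintype σ] (k : ℕ) :
    (esymm σ R k).IsHomogeneous k := by
  refine IsHomogeneous.sum _ _ _ fun t ht => ?_
  simpa [(mem_powersetCard.1 ht).2] using
    IsHomogeneous.prod t _ (fun _ => 1) fun i _ => isHomogeneous_X R i

theorem IsWeightedHomogeneous.isHomogeneous_aeval [CommSemiring R] [CommSemiring S]
    [Algebra R S] {w : σ → ℕ} {g : σ → MvPolynomial τ S}
    (hg : ∀ i, (g i).IsHomogeneous (w i)) {φ : MvPolynomial σ R} {m : ℕ}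
    (hφ : φ.IsWeightedHomogeneous w m) :
    (aeval g φ).IsHomogeneous m := by
  refine IsHomogeneous.sum _ _ _ fun d hd => ?_
  rw [← zero_add m]
  refine (isHomogeneous_C _ _).mul ?_
  convert IsHomogeneous.prod d.support _ _ fun i _ => (hg i).pow (d i) using 1
  · rfl
  rw [← hφ (mem_support_iff.1 hd), Finsupp.weight_apply, Finsupp.sum]
  simp_rw [smul_eq_mul, mul_comm]

theorem homogeneousComponent_aeval [CommSemiring R] [CommSemiring S] [Algebra R S]
    {w : σ → ℕ} {g : σ → MvPolynomial τ S} (hg : ∀ i, (g i).IsHomogeneous (w i))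
    (φ : MvPolynomial σ R) (m : ℕ) :
    homogeneousComponent m (aeval g φ) = aeval g (weightedHomogeneousComponent w m φ) := by
  classical
  conv_lhs => rw [φ.as_sum]
  rw [weightedHomogeneousComponent_apply, map_sum, map_sum, map_sum, sum_filter]
  refine sum_congr rfl fun d _ => ?_
  rw [homogeneousComponent_of_mem
    ((isWeightedHomogeneous_monomial w d _ rfl).isHomogeneous_aeval hg)]
  simp only [eq_comm]

theorem weightedTotalDegree_le_of_forall_weightedHomogeneousComponent_eq_zero [CommSemiring R]
    {w : σ → ℕ} {φ : MvPolynomial σ R} {D : ℕ}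
    (h : ∀ m, D < m → weightedHomogeneousComponent w m φ = 0) :
    weightedTotalDegree w φ ≤ D := by
  classical
  refine Finset.sup_le fun d hd => ?_
  by_contra! hlt
  have := congr_arg (coeff d) (h _ hlt)
  rw [coeff_weightedHomogeneousComponent, if_pos rfl, coeff_zero] at this
  exact mem_support_iff.1 hd this

theorem aeval_esymm_injective (n : ℕ) [CommRing R] :
    Function.Injective (aeval (R := R) (fun i : Fin n => esymm (Fin n) R (i + 1))) := fun p q h =>
  esymmAlgHom_fin_injective R le_rfl (Subtype.ext (by simpa only [esymmAlgHom_apply] using h))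

theorem exists_aeval_esymm_eq [CommRing R] {n : ℕ} {p : MvPolynomial (Fin n) R}
    (hp : p.IsSymmetric) :
    ∃ q, aeval (R := R) (fun i : Fin n => esymm (Fin n) R (i + 1)) q = p := by
  obtain ⟨q, hq⟩ := (esymmAlgHom_fin_bijective R n).2 ⟨p, hp⟩
  exact ⟨q, by rw [← esymmAlgHom_apply, hq]⟩

end MvPolynomial

theorem mweight_eq_weightedTotalDegree {R : Type*} [CommRing R] {n : ℕ}
    (q : MvPolynomial (Fin n) R) :
    mweight q = weightedTotalDegree (fun i : Fin n => i.1 + 1) q := by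
  refine Finset.sup_congr rfl fun m _ => ?_
  rw [Finsupp.weight_apply, Finsupp.sum_fintype _ _ (by simp)]
  simp_rw [smul_eq_mul, mul_comm]

theorem fundamental_theorem_symmetric_polynomials_weight
    (R : Type*) [CommRing R] (n : ℕ) (P : MvPolynomial (Fin n) R)
    (hP : P.IsSymmetric) :
    ∃ T : MvPolynomial (Fin n) R,
      P = MvPolynomial.bind₁
        (fun i : Fin n => MvPolynomial.esymm (Fin n) R (i.1 + 1)) T ∧
      mweight T ≤ P.totalDegree := by
  obtain ⟨T, rfl⟩ := exists_aeval_esymm_eq hP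
  have hesymm (i : Fin n) : (esymm (Fin n) R (i + 1)).IsHomogeneous (i.1 + 1) :=
    isHomogeneous_esymm _
  refine ⟨T, rfl, ?_⟩
  rw [mweight_eq_weightedTotalDegree]
  refine weightedTotalDegree_le_of_forall_weightedHomogeneousComponent_eq_zero fun m hm => ?_
  apply aeval_esymm_injective n
  rw [← homogeneousComponent_aeval hesymm, homogeneousComponent_eq_zero _ _ hm, map_zero]
end

section
/- Let T be a polynomial with integer coefficients, p ≥ 1, and F_p = X^{p-1} · T^p. Then every coefficient of the polynomial Σ_{i=p}^{deg F_p} F_p^{(i)} is divisible by p!. -/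
/-! The `i`-th derivative of `∑ aₙ Xⁿ` has `k`-th coefficient `(k + i)! / k! · a_{k+i}`, a multiple
of `i!`, hence of `p!` as soon as `p ≤ i`. -/

open Polynomial

theorem Polynomial.factorial_dvd_coeff_iterate_derivative {R : Type*} [Semiring R] (f : R[X])
    {p i : ℕ} (h : p ≤ i) (k : ℕ) : (p.factorial : R) ∣ (derivative^[i] f).coeff k := by
  rw [coeff_iterate_derivative, nsmul_eq_mul]
  exact (Nat.cast_dvd_cast ((Nat.factorial_dvd_factorial h).trans
    (Nat.factorial_dvd_descFactorial _ _))).mul_right _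

theorem derive_n_p_multiple_fact_p_general (T : Polynomial ℤ) (p : ℕ) :
    let Fp : Polynomial ℤ := Polynomial.X ^ (p - 1) * T ^ p
    ∀ k : ℕ, (p.factorial : ℤ) ∣
      (∑ i ∈ Finset.Icc p Fp.natDegree, (Polynomial.derivative)^[i] Fp).coeff k := by
  intro Fp k
  rw [finsetSum_coeff]
  exact Finset.dvd_sum fun i hi ↦
    Fp.factorial_dvd_coeff_iterate_derivative (Finset.mem_Icc.1 hi).1 k

theorem derive_n_p_multiple_fact_p (T : Polynomial ℤ) (p : ℕ) (hp : 1 ≤ p) :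
    let Fp : Polynomial ℤ := Polynomial.X ^ (p - 1) * T ^ p
    ∀ k : ℕ, (p.factorial : ℤ) ∣
      (∑ i ∈ Finset.Icc p Fp.natDegree, (Polynomial.derivative)^[i] Fp).coeff k :=
  derive_n_p_multiple_fact_p_general T p
end

section
/- For every polynomial P over ℂ and every complex number α, the integral from 0 to 1 of α·e^{-αx}·P(αx) dx equals P_d(0) − e^{-α}·P_d(α), where P_d is the sum of all derivatives of P. -/
open Polynomial

/-!
Writing `P_d` for the sum of the derivatives of `P`, the sum telescopes to `P_d - P_d' = P`.
Hence `x ↦ -e^{-αx} P_d(αx)` has derivative `α e^{-αx} (P_d - P_d')(αx) = α e^{-αx} P(αx)`,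
and the identity is the fundamental theorem of calculus on `[0, 1]`.
-/

theorem Polynomial.sum_range_iterate_derivative_sub_derivative {R : Type*} [Ring R] (P : R[X])
    {n : ℕ} (hn : P.natDegree < n) :
    (∑ i ∈ Finset.range n, derivative^[i] P) - derivative (∑ i ∈ Finset.range n, derivative^[i] P)
      = P := by
  simp only [map_sum, ← Function.iterate_succ_apply' derivative]
  rw [← Finset.sum_sub_distrib, Finset.sum_range_sub' (fun i => derivative^[i] P),
    iterate_derivative_eq_zero hn, Function.iterate_zero_apply, sub_zero]

theorem hasDerivAt_neg_cexp_mul_eval (Q : ℂ[X]) (α z : ℂ) :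
    HasDerivAt (fun z : ℂ => -(Complex.exp (-α * z) * Q.eval (α * z)))
      (α * Complex.exp (-α * z) * (Q - derivative Q).eval (α * z)) z := by
  have hexp : HasDerivAt (fun z : ℂ => Complex.exp (-α * z)) (Complex.exp (-α * z) * -α) z :=
    ((hasDerivAt_id' z).const_mul (-α)).cexp.congr_deriv (by ring)
  have heval : HasDerivAt (fun z : ℂ => Q.eval (α * z)) ((derivative Q).eval (α * z) * α) z :=
    ((Q.hasDerivAt (α * z)).comp z ((hasDerivAt_id' z).const_mul α)).congr_deriv (by ring)
  exact (hexp.mul heval).neg.congr_deriv (by rw [eval_sub]; ring)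

theorem I_identity (P : Polynomial ℂ) (α : ℂ) :
    let Pd : Polynomial ℂ :=
      ∑ i ∈ Finset.range (P.natDegree + 1), (Polynomial.derivative)^[i] P
    (∫ x in (0:ℝ)..1, α * Complex.exp (-α * x) * P.eval (α * x)) =
      Pd.eval 0 - Complex.exp (-α) * Pd.eval α := by
  intro Pd
  have hPd : Pd - derivative Pd = P :=
    P.sum_range_iterate_derivative_sub_derivative (Nat.lt_succ_self _)
  have hderiv : ∀ x : ℝ, HasDerivAt (fun x : ℝ => -(Complex.exp (-α * x) * Pd.eval (α * x)))
      (α * Complex.exp (-α * x) * P.eval (α * x)) x := fun x => by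
    simpa only [hPd] using (hasDerivAt_neg_cexp_mul_eval Pd α x).comp_ofReal
  have hcont : Continuous fun x : ℝ => α * Complex.exp (-α * x) * P.eval (α * x) := by fun_prop
  rw [intervalIntegral.integral_eq_sub_of_hasDerivAt (fun x _ => hderiv x)
    (hcont.intervalIntegrable 0 1)]
  simp only [Complex.ofReal_one, Complex.ofReal_zero, mul_one, mul_zero,
    Complex.exp_zero, one_mul]
  ring
end

section
/- The real number e (the base of the natural exponential) is transcendental: it is not a root of any nonzero polynomial with rational coefficients. -/
/-!
Hermite's argument. Suppose `∑ aₖ eᵏ = 0` with integers `aₖ` and `a₀ ≠ 0`. For each large prime `p`,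
integrating against the integer polynomial `X ^ (p - 1) * ∏ₖ (X - k) ^ p` produces an integer `m`
prime to `p` and integers `qₖ` with `|m eᵏ - p qₖ| ≤ c ^ p / (p - 1)!`. Multiplying the relation by
`m` then exhibits the integer `m a₀ + p ∑ aₖ qₖ`, which is not divisible by `p`, hence nonzero,
yet has absolute value less than `1` once `p` is large.
-/

open Polynomial Finset Filter
open scoped Nat

theorem Polynomial.exists_aeval_eq_zero_and_coeff_zero_ne_zero {R A : Type*} [CommRing R]
    [CommRing A] [IsDomain A] [Algebra R A] {x : A} (hx : x ≠ 0) {f : R[X]} (hf : f ≠ 0)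
    (hfx : aeval x f = 0) : ∃ g : R[X], aeval x g = 0 ∧ g.coeff 0 ≠ 0 := by
  obtain ⟨g, hfg, hX⟩ := exists_eq_pow_rootMultiplicity_mul_and_not_dvd f hf 0
  rw [C_0, sub_zero, X_dvd_iff] at hX
  rw [hfg, C_0, sub_zero, map_mul, map_pow, aeval_X, mul_eq_zero] at hfx
  exact ⟨g, hfx.resolve_left (pow_ne_zero _ hx), hX⟩

theorem exists_simultaneous_approx_exp_int (s : Finset ℤ) (hs : 0 ∉ s) :
    ∃ c : ℝ, ∀ᶠ p : ℕ in atTop, p.Prime → ∃ m : ℤ, ¬ (p : ℤ) ∣ m ∧ ∃ q : ℤ → ℤ,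
      ∀ k ∈ s, |m * Real.exp k - p * q k| ≤ c ^ p / ((p - 1)! : ℝ) := by
  set F : ℤ[X] := ∏ k ∈ s, (X - C k)
  have hF0 : F.eval 0 ≠ 0 := by
    simp only [F, eval_prod, eval_sub, eval_X, eval_C, zero_sub, prod_ne_zero_iff, neg_ne_zero]
    exact fun k hk h => hs (h ▸ hk)
  obtain ⟨c, hc⟩ := LindemannWeierstrass.exp_polynomial_approx F hF0
  refine ⟨c, (eventually_gt_atTop (F.eval 0).natAbs).mono fun p hpF hp => ?_⟩
  obtain ⟨m, hm, q, -, hq⟩ := hc p hpF hp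
  refine ⟨m, hm, fun k => q.eval k, fun k hk => ?_⟩
  have hroot : (k : ℂ) ∈ F.aroots ℂ := by
    refine mem_aroots.mpr ⟨fun h => hF0 (by simp [h]), ?_⟩
    rw [map_prod]
    exact prod_eq_zero hk (by simp)
  have hcast : m • Complex.exp k - p • aeval (k : ℂ) q
      = ((m * Real.exp k - p * q.eval k : ℝ) : ℂ) := by
    have haeval : aeval (k : ℂ) q = ((q.eval k : ℤ) : ℂ) := by
      simp only [aeval_def, algebraMap_int_eq, eval₂_eq_eval_map, eval_intCast_map, Int.cast_eq,
        eq_intCast]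
    push_cast
    rw [haeval, zsmul_eq_mul, nsmul_eq_mul]
  simpa only [hcast, Complex.norm_real, Real.norm_eq_abs] using hq hroot

theorem Finset.abs_sum_mul_le_sum_abs_mul {ι R : Type*} [Ring R] [LinearOrder R]
    [IsOrderedRing R] (s : Finset ι) (a : ι → R) {ε : ι → R} {δ : R}
    (hε : ∀ i ∈ s, |ε i| ≤ δ) : |∑ i ∈ s, a i * ε i| ≤ (∑ i ∈ s, |a i|) * δ := calc
  |∑ i ∈ s, a i * ε i| ≤ ∑ i ∈ s, |a i * ε i| := abs_sum_le_sum_abs _ _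
  _ ≤ ∑ i ∈ s, |a i| * δ := sum_le_sum fun i hi => by
    rw [abs_mul]
    exact mul_le_mul_of_nonneg_left (hε i hi) (abs_nonneg _)
  _ = (∑ i ∈ s, |a i|) * δ := (sum_mul _ _ _).symm

theorem aeval_exp_one_eq (g : ℤ[X]) : aeval (Real.exp 1) g
    = g.coeff 0 + ∑ k ∈ range g.natDegree, (g.coeff (k + 1) : ℝ) * Real.exp (k + 1) := by
  rw [aeval_eq_sum_range, sum_range_succ', add_comm]
  simp only [← Real.exp_nat_mul, Nat.cast_add, Nat.cast_one, mul_one, zsmul_eq_mul, pow_zero]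

theorem aeval_exp_one_ne_zero_of_coeff_zero_ne_zero {g : ℤ[X]} (hg : g.coeff 0 ≠ 0) :
    aeval (Real.exp 1) g ≠ 0 := by
  intro hroot
  rw [aeval_exp_one_eq] at hroot
  set n := g.natDegree
  obtain ⟨c, hc⟩ := exists_simultaneous_approx_exp_int ((range n).image fun k : ℕ => (k : ℤ) + 1)
    (by simp only [mem_image, not_exists, not_and]; omega)
  set A := ∑ k ∈ range n, |(g.coeff (k + 1) : ℝ)|
  obtain ⟨p, ⟨⟨happrox, hpg⟩, hpA⟩, hp⟩ := ((hc.and (eventually_gt_atTop (g.coeff 0).natAbs)).and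
    (FloorSemiring.eventually_mul_pow_lt_factorial_sub A c 1)).and_frequently
    (Nat.frequently_atTop_iff_infinite.mpr Nat.infinite_setOfPred_prime) |>.exists
  obtain ⟨m, hm, q, hq⟩ := happrox hp
  set N : ℤ := m * g.coeff 0 + p * ∑ k ∈ range n, g.coeff (k + 1) * q (k + 1)
  have hN : N ≠ 0 := by
    have hpg : ¬ (p : ℤ) ∣ g.coeff 0 := fun h =>
      hpg.not_ge (Nat.le_of_dvd (Int.natAbs_pos.mpr hg) (Int.natCast_dvd.mp h))
    have hpN : ¬ (p : ℤ) ∣ N := by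
      rw [dvd_add_left (dvd_mul_right _ _)]
      exact (Nat.prime_iff_prime_int.mp hp).not_dvd_mul hm hpg
    exact fun h => hpN (h ▸ dvd_zero _)
  have hNR : (N : ℝ) = -∑ k ∈ range n, (g.coeff (k + 1) : ℝ) *
      (m * Real.exp (k + 1) - p * q (k + 1)) := by
    have hdistrib : ∑ k ∈ range n, (g.coeff (k + 1) : ℝ) *
        (m * Real.exp (k + 1) - p * q (k + 1))
        = m * ∑ k ∈ range n, (g.coeff (k + 1) : ℝ) * Real.exp (k + 1)
          - p * ∑ k ∈ range n, (g.coeff (k + 1) : ℝ) * q (k + 1) := by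
      rw [mul_sum, mul_sum, ← sum_sub_distrib]
      exact sum_congr rfl fun k _ => by ring
    rw [hdistrib]
    simp only [N, Int.cast_add, Int.cast_mul, Int.cast_sum, Int.cast_natCast]
    linear_combination (m : ℝ) * hroot
  have hNlt : |(N : ℝ)| < 1 := calc
    |(N : ℝ)| ≤ A * (c ^ p / (p - 1)!) := by
      rw [hNR, abs_neg]
      refine abs_sum_mul_le_sum_abs_mul _ _ fun k hk => ?_
      simpa using hq _ (mem_image_of_mem _ hk)
    _ < 1 := by
      rw [← mul_div_assoc, div_lt_one (by positivity)]
      exact hpA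
  exact hNlt.not_ge (by exact_mod_cast Int.one_le_abs hN)

theorem e_transcendental : Transcendental ℚ (Real.exp 1) := by
  intro h
  obtain ⟨f, hf, hfe⟩ := (IsFractionRing.isAlgebraic_iff ℤ ℚ ℝ).mpr h
  obtain ⟨g, hge, hg⟩ := exists_aeval_eq_zero_and_coeff_zero_ne_zero (Real.exp_ne_zero 1) hf hfe
  exact aeval_exp_one_ne_zero_of_coeff_zero_ne_zero hg hge
end
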